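/- The regularized Heaviside function H_ε is continuously differentiable on ℝ, and its derivative equals the regularized Dirac function δ_ε given by δ_ε(φ) = (1/(2ε))(1 + cos(πφ/ε)) for |φ| ≤ ε and δ_ε(φ) = 0 for |φ| > ε. -/

import Mathlib

open Real

/-- The regularized Heaviside function `H_ε`. -/
noncomputable def regHeaviside (ε φ : ℝ) : ℝ :=
  if φ < -ε then 0
  else if φ ≤ ε then (1 / 2) * (1 + φ / ε + (1 / π) * Real.sin (π * φ / ε))
  else 1

/-- The regularized Dirac function `δ_ε`. -/
noncomputable def regDirac (ε φ : ℝ) : ℝ :=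
  if |φ| ≤ ε then (1 / (2 * ε)) * (1 + Real.cos (π * φ / ε)) else 0

/-- `H_ε` is continuously differentiable on `ℝ` and its derivative
equals the regularized Dirac function `δ_ε`. -/
theorem regHeaviside_contDiff_and_hasDerivAt_regDirac (ε : ℝ) (hε : 0 < ε) :
    ContDiff ℝ 1 (regHeaviside ε) ∧
      ∀ φ : ℝ, HasDerivAt (regHeaviside ε) (regDirac ε φ) φ := by
  have hεne : ε ≠ 0 := hε.ne'
  have hπ : (π : ℝ) ≠ 0 := Real.pi_ne_zero
  set g : ℝ → ℝ := fun φ => (1 / 2) * (1 + φ / ε + (1 / π) * Real.sin (π * φ / ε)) with hgdef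
  have hgd : ∀ φ : ℝ, HasDerivAt g ((1 / (2 * ε)) * (1 + Real.cos (π * φ / ε))) φ := by
    intro φ
    have h1 : HasDerivAt (fun x : ℝ => π * x / ε) (π / ε) φ := by
      simpa using ((hasDerivAt_id φ).const_mul π).div_const ε
    have h2 : HasDerivAt (fun x : ℝ => Real.sin (π * x / ε)) (Real.cos (π * φ / ε) * (π / ε)) φ :=
      (Real.hasDerivAt_sin _).comp φ h1
    have h3 : HasDerivAt g ((1/2) * ((0 + 1 / ε) + (1/π) * (Real.cos (π * φ / ε) * (π / ε)))) φ :=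
      ((((hasDerivAt_const φ (1:ℝ)).add ((hasDerivAt_id φ).div_const ε)).add
        (h2.const_mul (1/π))).const_mul (1/2))
    convert h3 using 1
    field_simp
    ring
  have hμ : π * ε / ε = π := by field_simp
  have hν : π * (-ε) / ε = -π := by field_simp
  have hcosε : (1 / (2 * ε)) * (1 + Real.cos (π * ε / ε)) = 0 := by
    rw [hμ, Real.cos_pi]; ring
  have hcosν : (1 / (2 * ε)) * (1 + Real.cos (π * (-ε) / ε)) = 0 := by
    rw [hν, Real.cos_neg, Real.cos_pi]; ring
  have hgε : g ε = 1 := by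
    simp only [hgdef]
    rw [hμ, Real.sin_pi]
    field_simp
    ring
  have hgν : g (-ε) = 0 := by
    simp only [hgdef]
    rw [hν, Real.sin_neg, Real.sin_pi]
    field_simp
    ring
  have hfmid : ∀ x : ℝ, ¬ x < -ε → x ≤ ε → regHeaviside ε x = g x := by
    intro x h1 h2
    simp [regHeaviside, h1, h2, hgdef]
  have key : ∀ φ : ℝ, HasDerivAt (regHeaviside ε) (regDirac ε φ) φ := by
    intro φ
    rcases lt_trichotomy φ (-ε) with h | h | h
    · have hval : regDirac ε φ = 0 := by
        rw [regDirac, if_neg]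
        rw [abs_le]; push_neg
        intro h'; linarith
      rw [hval]
      refine (hasDerivAt_const φ (0:ℝ)).congr_of_eventuallyEq ?_
      filter_upwards [Iio_mem_nhds h] with x hx
      simp [regHeaviside, show x < -ε from hx]
    · -- φ = -ε
      subst h
      have hval : regDirac ε (-ε) = 0 := by
        rw [regDirac, if_pos (by rw [abs_neg, abs_of_pos hε])]
        exact hcosν
      rw [hval]
      have hleft : HasDerivWithinAt (regHeaviside ε) 0 (Set.Iic (-ε)) (-ε) := by
        refine ((hasDerivAt_const (-ε) (0:ℝ)).hasDerivWithinAt).congr ?_ ?_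
        · intro x hx
          rcases (Set.mem_Iic.mp hx).lt_or_eq with h' | h'
          · simp [regHeaviside, h']
          · subst h'
            rw [hfmid _ (lt_irrefl _) (by linarith), hgν]
        · rw [hfmid _ (lt_irrefl _) (by linarith), hgν]
      have hgd0 : HasDerivAt g 0 (-ε) := hcosν ▸ hgd (-ε)
      have hright : HasDerivWithinAt (regHeaviside ε) 0 (Set.Ici (-ε)) (-ε) := by
        refine (hgd0.hasDerivWithinAt).congr_of_eventuallyEq ?_ ?_
        · have hmem : Set.Iio ε ∈ nhdsWithin (-ε) (Set.Ici (-ε)) :=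
            nhdsWithin_le_nhds (Iio_mem_nhds (by linarith))
          filter_upwards [hmem, self_mem_nhdsWithin] with x hx hx'
          exact hfmid x (not_lt.mpr hx') hx.le
        · exact hfmid _ (lt_irrefl _) (by linarith)
      have := hleft.union hright
      rw [Set.Iic_union_Ici] at this
      exact hasDerivWithinAt_univ.mp this
    · rcases lt_trichotomy φ ε with h2 | h2 | h2
      · -- interior
        have hval : regDirac ε φ = (1 / (2 * ε)) * (1 + Real.cos (π * φ / ε)) := by
          rw [regDirac, if_pos (abs_le.mpr ⟨by linarith, by linarith⟩)]
        rw [hval]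
        refine (hgd φ).congr_of_eventuallyEq ?_
        filter_upwards [Ioo_mem_nhds h h2] with x hx
        exact hfmid x (not_lt.mpr hx.1.le) hx.2.le
      · -- φ = ε
        have hval : regDirac ε φ = 0 := by
          rw [regDirac, h2, if_pos (by rw [abs_of_pos hε])]
          exact hcosε
        rw [hval, h2]
        have hgd0 : HasDerivAt g 0 ε := hcosε ▸ hgd ε
        have hleft : HasDerivWithinAt (regHeaviside ε) 0 (Set.Iic ε) ε := by
          refine (hgd0.hasDerivWithinAt).congr_of_eventuallyEq ?_ ?_
          · have hmem : Set.Ioi (-ε) ∈ nhdsWithin ε (Set.Iic ε) :=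
              nhdsWithin_le_nhds (Ioi_mem_nhds (by linarith))
            filter_upwards [hmem, self_mem_nhdsWithin] with x hx hx'
            exact hfmid x (not_lt.mpr hx.le) hx'
          · exact hfmid _ (not_lt.mpr (by linarith)) le_rfl
        have hright : HasDerivWithinAt (regHeaviside ε) 0 (Set.Ici ε) ε := by
          refine ((hasDerivAt_const ε (1:ℝ)).hasDerivWithinAt).congr ?_ ?_
          · intro x hx
            rcases (Set.mem_Ici.mp hx).lt_or_eq with h' | h'
            · simp [regHeaviside, not_lt.mpr (by linarith : -ε ≤ x), not_le.mpr h']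
            · rw [← h', hfmid _ (not_lt.mpr (by linarith)) le_rfl, hgε]
          · rw [hfmid _ (not_lt.mpr (by linarith)) le_rfl, hgε]
        have := hleft.union hright
        rw [Set.Iic_union_Ici] at this
        exact hasDerivWithinAt_univ.mp this
      · -- φ > ε
        have hval : regDirac ε φ = 0 := by
          rw [regDirac, if_neg]
          rw [abs_le]; push_neg
          intro; linarith
        rw [hval]
        refine (hasDerivAt_const φ (1:ℝ)).congr_of_eventuallyEq ?_
        filter_upwards [Ioi_mem_nhds h2] with x hx
        have hx' : ε < x := hx
        simp [regHeaviside, not_lt.mpr (by linarith : -ε ≤ x), not_le.mpr hx']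
    
  refine ⟨?_, key⟩
  have hderiv : deriv (regHeaviside ε) = regDirac ε := funext fun φ => (key φ).deriv
  rw [contDiff_one_iff_deriv]
  refine ⟨fun φ => (key φ).differentiableAt, ?_⟩
  rw [hderiv]
  have : regDirac ε = fun φ => if |φ| ≤ ε then (1 / (2 * ε)) * (1 + Real.cos (π * φ / ε)) else 0 :=
    rfl
  rw [this]
  refine Continuous.if_le ?_ continuous_const ?_ continuous_const ?_
  · exact continuous_const.mul (continuous_const.add
      (Real.continuous_cos.comp ((continuous_const.mul continuous_id).div_const ε)))
  · exact continuous_abs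
  · intro x hx
    rcases abs_eq hε.le |>.mp hx with h | h
    · subst h; exact hcosε
    · subst h; exact hcosν
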